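/- Let λ > 0, J₂ ∈ ℝ, v₀ ∈ ℝ and z₂ ∈ ℂ. Then (1/π)·∫_{−π/2}^{π/2} S(λ·(v₀ + √|J₂|·Re(z₂·e^{−4iy})))·e^{2iy} dy = 0; i.e., in the two-mode Ring Model the first-mode component B₁(v₀, z₁, z₂) of the stationary equations vanishes when z₁ = 0, as required by the O(2)-equivariant normal form. -/

import Mathlib

open Real Complex

/-- The logistic sigmoid. -/
noncomputable def S (x : ℝ) : ℝ := 1 / (1 + Real.exp (-x))

/-!
The factor `S(λ (v₀ + √|J₂| Re(z₂ e^{-4iy})))` has period `π/2` in `y`, while `e^{2iy}`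
changes sign under `y ↦ y + π/2`. So the integrand is antiperiodic with antiperiod `π/2`, and
the integral of an antiperiodic function over twice its antiperiod vanishes: the second half
cancels the first.
-/

theorem S_eq_sigmoid : S = Real.sigmoid := by
  funext x
  rw [S, sigmoid_def, one_div]

@[fun_prop]
theorem continuous_S : Continuous S :=
  S_eq_sigmoid ▸ continuous_sigmoid

namespace Function

theorem Periodic.mul_antiperiodic {α β : Type*} [Add α] [Mul β] [HasDistribNeg β]
    {f g : α → β} {c : α} (hf : Periodic f c) (hg : Antiperiodic g c) :
    Antiperiodic (f * g) c := by
  simp_all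

theorem Antiperiodic.intervalIntegral_add_two_mul_eq_zero {E : Type*} [NormedAddCommGroup E]
    [NormedSpace ℝ E] {f : ℝ → E} {c : ℝ} (hf : Antiperiodic f c) (a : ℝ)
    (hint : IntervalIntegrable f MeasureTheory.volume a (a + c)) :
    ∫ x in a..a + 2 * c, f x = 0 := by
  have hshift : ∫ x in a + c..a + 2 * c, f x = -∫ x in a..a + c, f x := by
    calc ∫ x in a + c..a + 2 * c, f x = ∫ x in a..a + c, f (x + c) := by
          rw [intervalIntegral.integral_comp_add_right]; ring_nf
      _ = -∫ x in a..a + c, f x := by simp only [hf _, intervalIntegral.integral_neg]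
  have hint' : IntervalIntegrable f MeasureTheory.volume (a + c) (a + 2 * c) := by
    have h := (hint.comp_sub_right c).neg
    rw [show a + c + c = a + 2 * c by ring] at h
    convert h using 1
    funext x
    simp only [Pi.neg_apply, hf.sub_eq, neg_neg]
  rw [← intervalIntegral.integral_add_adjacent_intervals hint hint', hshift, add_neg_cancel]

end Function

theorem periodic_exp_neg_four_mul_I :
    Function.Periodic (fun y : ℝ ↦ exp (-(4 * y) * I)) (π / 2) := by
  intro y
  dsimp only
  rw [show -(4 * ((y + π / 2 : ℝ) : ℂ)) * I = -(4 * y) * I + -(2 * π * I) by push_cast; ring,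
    exp_periodic.neg]

theorem antiperiodic_exp_two_mul_I :
    Function.Antiperiodic (fun y : ℝ ↦ exp (2 * y * I)) (π / 2) := by
  intro y
  dsimp only
  rw [show 2 * ((y + π / 2 : ℝ) : ℂ) * I = 2 * y * I + π * I by push_cast; ring,
    exp_antiperiodic]

theorem stmt_19_general (lam J₂ v₀ : ℝ) (z₂ : ℂ) :
    (1 / (π : ℂ)) * ∫ y in (-(π/2))..(π/2),
      ((S (lam * (v₀ + Real.sqrt |J₂| * (z₂ * Complex.exp (-(4 * y) * Complex.I)).re)) : ℝ) : ℂ)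
        * Complex.exp (2 * y * Complex.I) = 0 := by
  have hperiodic := periodic_exp_neg_four_mul_I.comp
    fun w ↦ ((S (lam * (v₀ + √|J₂| * (z₂ * w).re)) : ℝ) : ℂ)
  have hcont : Continuous fun y : ℝ ↦
      ((S (lam * (v₀ + √|J₂| * (z₂ * exp (-(4 * y) * I)).re)) : ℝ) : ℂ) * exp (2 * y * I) := by
    fun_prop
  have hzero := (hperiodic.mul_antiperiodic antiperiodic_exp_two_mul_I)
    |>.intervalIntegral_add_two_mul_eq_zero (-(π / 2)) (hcont.intervalIntegrable _ _)
  rw [show -(π / 2) + 2 * (π / 2) = π / 2 by ring] at hzero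
  rw [← mul_zero (1 / (π : ℂ)), ← hzero]
  rfl

/-- in the two-mode Ring Model the first-mode component of the stationary
equations vanishes when `z₁ = 0`, as required by the `O(2)`-equivariant normal form. -/
theorem stmt_19 (lam J₂ v₀ : ℝ) (hlam : 0 < lam) (z₂ : ℂ) :
    (1 / (π : ℂ)) * ∫ y in (-(π/2))..(π/2),
      ((S (lam * (v₀ + Real.sqrt |J₂| * (z₂ * Complex.exp (-(4 * y) * Complex.I)).re)) : ℝ) : ℂ)
        * Complex.exp (2 * y * Complex.I) = 0 :=
  stmt_19_general lam J₂ v₀ z₂
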